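/- arXiv:0910.3227 — 2 statements merged into one kernel-verified Lean document; each statement's English description precedes it below -/
import Mathlib

section
/- Let k1 > k2 > 0, μ1 > μ2 > 0, θ1, θ2 > 0 with θ1 + θ2 = 1. Define L2 = k2(k1 + (4/3)μ1)/(k1k2 + (k1θ1 + k2θ2)(4/3)μ1), M2 = k2(k1 + (4/3)μ2)/(k1k2 + (k1θ1 + k2θ2)(4/3)μ2), and let K⁻, K⁺ be the Hashin–Shtrikman bulk modulus bounds. If K⁻ ≤ Ke ≤ K⁺ and X = θ2⁻¹ (1/k1 − 1/Ke)/(1/k1 − 1/k2), then L2 ≤ X ≤ M2. -/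
/-!
Writing `m = (4/3) μ`, the Hashin–Shtrikman bound is the Möbius expression
`K(m) = (k₁k₂ + (k₁θ₁ + k₂θ₂) m) / (k₁θ₂ + k₂θ₁ + m)`, and the map `K ↦ θ₂⁻¹ (1/k₁ - 1/K) / (1/k₁ - 1/k₂)`
sends `K(m)` to `k₂ (k₁ + m) / (k₁k₂ + (k₁θ₁ + k₂θ₂) m)`. That map is decreasing on `K > 0`, and
`K⁻ > 0`, so `K⁻ ≤ Ke ≤ K⁺` turns into `L₂ ≤ X ≤ M₂`.
-/

section HashinShtrikman

variable {𝕜 : Type*} [Field 𝕜]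

def hsBulkBound (k1 k2 θ1 θ2 m : 𝕜) : 𝕜 :=
  k1 * θ1 + k2 * θ2 - θ1 * θ2 * (k2 - k1) ^ 2 / (k1 * θ2 + k2 * θ1 + m)

def complianceFraction (k1 k2 θ2 K : 𝕜) : 𝕜 :=
  θ2⁻¹ * (1 / k1 - 1 / K) / (1 / k1 - 1 / k2)

theorem hsBulkBound_eq {k1 k2 θ1 θ2 m : 𝕜} (hsum : θ1 + θ2 = 1)
    (hD : k1 * θ2 + k2 * θ1 + m ≠ 0) :
    hsBulkBound k1 k2 θ1 θ2 m =
      (k1 * k2 + (k1 * θ1 + k2 * θ2) * m) / (k1 * θ2 + k2 * θ1 + m) := by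
  obtain rfl : θ1 = 1 - θ2 := eq_sub_of_add_eq hsum
  rw [hsBulkBound, eq_div_iff hD, sub_mul, div_mul_cancel₀ _ hD]
  ring

theorem complianceFraction_hsBulkBound {k1 k2 θ1 θ2 m : 𝕜} (hsum : θ1 + θ2 = 1)
    (hk1 : k1 ≠ 0) (hk2 : k2 ≠ 0) (hk : k1 ≠ k2) (hθ2 : θ2 ≠ 0)
    (hD : k1 * θ2 + k2 * θ1 + m ≠ 0) (hN : k1 * k2 + (k1 * θ1 + k2 * θ2) * m ≠ 0) :
    complianceFraction k1 k2 θ2 (hsBulkBound k1 k2 θ1 θ2 m) =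
      k2 * (k1 + m) / (k1 * k2 + (k1 * θ1 + k2 * θ2) * m) := by
  have hgap : 1 / k1 - 1 / hsBulkBound k1 k2 θ1 θ2 m =
      θ2 * (k2 - k1) * (k1 + m) / (k1 * (k1 * k2 + (k1 * θ1 + k2 * θ2) * m)) := by
    rw [hsBulkBound_eq hsum hD, one_div_div, div_sub_div _ _ hk1 hN]
    obtain rfl : θ1 = 1 - θ2 := eq_sub_of_add_eq hsum
    congr 1
    ring
  rw [complianceFraction, hgap, div_sub_div _ _ hk1 hk2]
  field_simp

end HashinShtrikman

theorem hsBulkBound_pos {k1 k2 θ1 θ2 m : ℝ} (hk1 : 0 < k1) (hk2 : 0 < k2)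
    (hθ1 : 0 < θ1) (hθ2 : 0 < θ2) (hsum : θ1 + θ2 = 1) (hm : 0 ≤ m) :
    0 < hsBulkBound k1 k2 θ1 θ2 m := by
  have hD : 0 < k1 * θ2 + k2 * θ1 + m := by positivity
  rw [hsBulkBound_eq hsum hD.ne']
  positivity

theorem complianceFraction_antitoneOn {k1 k2 θ2 : ℝ} (hk : k2 < k1) (hk2 : 0 < k2)
    (hθ2 : 0 < θ2) : AntitoneOn (complianceFraction k1 k2 θ2) (Set.Ioi 0) := by
  intro a ha b _ hab
  have hden : 1 / k1 - 1 / k2 < 0 := sub_neg.mpr (one_div_lt_one_div_of_lt hk2 hk)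
  have hinv : 1 / k1 - 1 / a ≤ 1 / k1 - 1 / b :=
    sub_le_sub_left (one_div_le_one_div_of_le ha hab) _
  exact div_le_div_of_nonpos_of_le hden.le
    (mul_le_mul_of_nonneg_left hinv (inv_nonneg.mpr hθ2.le))

theorem X_interval_wellordered (k1 k2 μ1 μ2 θ1 θ2 Ke X : ℝ)
    (hk : k1 > k2) (hk2 : k2 > 0) (hμ : μ1 > μ2) (hμ2 : μ2 > 0)
    (hθ1 : θ1 > 0) (hθ2 : θ2 > 0) (hsum : θ1 + θ2 = 1)
    (hKm : k1 * θ1 + k2 * θ2 - θ1 * θ2 * (k2 - k1)^2 / (k1 * θ2 + k2 * θ1 + (4/3) * μ2) ≤ Ke)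
    (hKp : Ke ≤ k1 * θ1 + k2 * θ2 - θ1 * θ2 * (k2 - k1)^2 / (k1 * θ2 + k2 * θ1 + (4/3) * μ1))
    (hX : X = θ2⁻¹ * (1/k1 - 1/Ke) / (1/k1 - 1/k2)) :
    k2 * (k1 + (4/3) * μ1) / (k1 * k2 + (k1 * θ1 + k2 * θ2) * ((4/3) * μ1)) ≤ X ∧
    X ≤ k2 * (k1 + (4/3) * μ2) / (k1 * k2 + (k1 * θ1 + k2 * θ2) * ((4/3) * μ2)) := by
  have hk1 : 0 < k1 := hk2.trans hk
  have hS : 0 < k1 * θ1 + k2 * θ2 := by positivity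
  have hm (μ : ℝ) (hμ : 0 < μ) :
      complianceFraction k1 k2 θ2 (hsBulkBound k1 k2 θ1 θ2 ((4/3) * μ)) =
        k2 * (k1 + (4/3) * μ) / (k1 * k2 + (k1 * θ1 + k2 * θ2) * ((4/3) * μ)) :=
    complianceFraction_hsBulkBound hsum hk1.ne' hk2.ne' hk.ne' hθ2.ne'
      (by positivity) (by positivity)
  have hKe : 0 < Ke := (hsBulkBound_pos hk1 hk2 hθ1 hθ2 hsum (by positivity)).trans_le hKm
  have hanti := complianceFraction_antitoneOn hk hk2 hθ2
  rw [hX, ← hm μ1 (hμ2.trans hμ), ← hm μ2 hμ2]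
  exact ⟨hanti hKe (hKe.trans_le hKp) hKp,
    hanti (hsBulkBound_pos hk1 hk2 hθ1 hθ2 hsum (by positivity)) hKe hKm⟩
end

section
/- Let k1 > k2 > 0, μ1 > μ2 > 0, θ1, θ2 > 0 with θ1 + θ2 = 1. Define L1 = k1(k2 + (4/3)μ2)/(k1k2 + (k1θ1 + k2θ2)(4/3)μ2), M1 = k1(k2 + (4/3)μ1)/(k1k2 + (k1θ1 + k2θ2)(4/3)μ1), and let K⁻ ≤ Ke ≤ K⁺ be the Hashin–Shtrikman bounds. If Y = θ1⁻¹ (1/k2 − 1/Ke)/(1/k2 − 1/k1), then L1 ≤ Y ≤ M1. -/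
/-!
With `θ1 + θ2 = 1` the Hashin–Shtrikman bound with shear parameter `a = (4/3) μ` is the ratio
`(k1 k2 + (k1 θ1 + k2 θ2) a) / (k1 θ2 + k2 θ1 + a)`. The map `s ↦ θ1⁻¹ (1/k2 - s) / (1/k2 - 1/k1)`
is antitone for `k2 < k1`, and at the compliance `s = 1/K` of that bound it takes the value
`k1 (k2 + a) / (k1 k2 + (k1 θ1 + k2 θ2) a)`, because `N - k2 D = θ1 (k1 - k2)(k2 + a)` for the
numerator `N` and denominator `D` of the ratio. Inverting `K⁻ ≤ Ke ≤ K⁺` and applying the map gives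
the two bounds on `Y`.
-/

noncomputable section

/-- The Hashin–Shtrikman bulk modulus bound with shear parameter `a = (4/3) μ`. -/
def hashinShtrikman (k1 k2 θ1 θ2 a : ℝ) : ℝ :=
  k1 * θ1 + k2 * θ2 - θ1 * θ2 * (k2 - k1) ^ 2 / (k1 * θ2 + k2 * θ1 + a)

/-- The paper's variable `Y` as a function of the effective bulk compliance `s = 1/Ke`. -/
def normalizedCompliance (k1 k2 θ1 s : ℝ) : ℝ :=
  θ1⁻¹ * (1 / k2 - s) / (1 / k2 - 1 / k1)

end

section

variable {k1 k2 θ1 θ2 a : ℝ}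

theorem hashinShtrikman_eq_div (hsum : θ1 + θ2 = 1) (hD : k1 * θ2 + k2 * θ1 + a ≠ 0) :
    hashinShtrikman k1 k2 θ1 θ2 a =
      (k1 * k2 + (k1 * θ1 + k2 * θ2) * a) / (k1 * θ2 + k2 * θ1 + a) := by
  rw [eq_div_iff hD, hashinShtrikman, sub_mul, div_mul_cancel₀ _ hD]
  obtain rfl : θ2 = 1 - θ1 := by linarith
  ring

theorem hashinShtrikman_pos (hk1 : 0 < k1) (hk2 : 0 < k2) (hθ1 : 0 < θ1) (hθ2 : 0 < θ2)
    (hsum : θ1 + θ2 = 1) (ha : 0 < a) : 0 < hashinShtrikman k1 k2 θ1 θ2 a := by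
  rw [hashinShtrikman_eq_div hsum (by positivity)]
  positivity

theorem normalizedCompliance_antitone (hk2 : 0 < k2) (hk : k2 < k1) (hθ1 : 0 < θ1) :
    Antitone (normalizedCompliance k1 k2 θ1) := by
  have hgap : 0 < 1 / k2 - 1 / k1 := sub_pos.mpr (one_div_lt_one_div_of_lt hk2 hk)
  intro s t hst
  unfold normalizedCompliance
  gcongr

theorem normalizedCompliance_inv_hashinShtrikman (hk1 : 0 < k1) (hk2 : 0 < k2) (hk : k2 < k1)
    (hθ1 : 0 < θ1) (hθ2 : 0 < θ2) (hsum : θ1 + θ2 = 1) (ha : 0 < a) :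
    normalizedCompliance k1 k2 θ1 (1 / hashinShtrikman k1 k2 θ1 θ2 a) =
      k1 * (k2 + a) / (k1 * k2 + (k1 * θ1 + k2 * θ2) * a) := by
  rw [hashinShtrikman_eq_div hsum (by positivity)]
  have hN : 0 < k1 * k2 + (k1 * θ1 + k2 * θ2) * a := by positivity
  have hgap : k1 - k2 ≠ 0 := sub_ne_zero.mpr hk.ne'
  obtain rfl : θ2 = 1 - θ1 := by linarith
  unfold normalizedCompliance
  field_simp
  ring

end

theorem Y_interval_wellordered (k1 k2 μ1 μ2 θ1 θ2 Ke Y : ℝ)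
    (hk : k1 > k2) (hk2 : k2 > 0) (hμ : μ1 > μ2) (hμ2 : μ2 > 0)
    (hθ1 : θ1 > 0) (hθ2 : θ2 > 0) (hsum : θ1 + θ2 = 1)
    (hKm : k1 * θ1 + k2 * θ2 - θ1 * θ2 * (k2 - k1)^2 / (k1 * θ2 + k2 * θ1 + (4/3) * μ2) ≤ Ke)
    (hKp : Ke ≤ k1 * θ1 + k2 * θ2 - θ1 * θ2 * (k2 - k1)^2 / (k1 * θ2 + k2 * θ1 + (4/3) * μ1))
    (hY : Y = θ1⁻¹ * (1/k2 - 1/Ke) / (1/k2 - 1/k1)) :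
    k1 * (k2 + (4/3) * μ2) / (k1 * k2 + (k1 * θ1 + k2 * θ2) * ((4/3) * μ2)) ≤ Y ∧
    Y ≤ k1 * (k2 + (4/3) * μ1) / (k1 * k2 + (k1 * θ1 + k2 * θ2) * ((4/3) * μ1)) := by
  have hk1 : 0 < k1 := hk2.trans hk
  have ha2 : 0 < (4 / 3) * μ2 := by positivity
  have ha1 : 0 < (4 / 3) * μ1 := by linarith
  have hKm' : hashinShtrikman k1 k2 θ1 θ2 ((4 / 3) * μ2) ≤ Ke := hKm
  have hKp' : Ke ≤ hashinShtrikman k1 k2 θ1 θ2 ((4 / 3) * μ1) := hKp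
  have hK2 := hashinShtrikman_pos hk1 hk2 hθ1 hθ2 hsum ha2
  have hKe : 0 < Ke := hK2.trans_le hKm'
  have hY' : Y = normalizedCompliance k1 k2 θ1 (1 / Ke) := hY
  have hanti := normalizedCompliance_antitone hk2 hk hθ1
  rw [hY', ← normalizedCompliance_inv_hashinShtrikman hk1 hk2 hk hθ1 hθ2 hsum ha2,
    ← normalizedCompliance_inv_hashinShtrikman hk1 hk2 hk hθ1 hθ2 hsum ha1]
  exact ⟨hanti (one_div_le_one_div_of_le hK2 hKm'), hanti (one_div_le_one_div_of_le hKe hKp')⟩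
end
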